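/- arXiv:1506.00552 — 5 statements merged into one kernel-verified Lean document; each statement's English description precedes it below -/
import Mathlib

section
/- Let f : ℝⁿ → ℝ be differentiable with coordinate-wise L-Lipschitz continuous gradient, i.e., |∇ᵢf(x + α eᵢ) − ∇ᵢf(x)| ≤ L|α| for all x ∈ ℝⁿ, α ∈ ℝ, and every coordinate i (where eᵢ is the i-th standard basis vector). Then for any x ∈ ℝⁿ and any coordinate i, the point x⁺ = x − (1/L)∇ᵢf(x)eᵢ satisfies f(x⁺) ≤ f(x) − (1/(2L))(∇ᵢf(x))². -/
open scoped RealInnerProductSpace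

/-! Along the line `t ↦ x + t • eᵢ` the function `f` restricts to a function of one variable
whose derivative `t ↦ ∇ᵢf(x + t • eᵢ)` is `L`-Lipschitz at `0`, so the function lies below
its quadratic model `f x + t ∇ᵢf(x) + L t² / 2`; that model is minimised at `t = -∇ᵢf(x) / L`,
where it equals `f x - ∇ᵢf(x)² / (2L)`. -/

lemma le_add_mul_add_sq_of_abs_deriv_sub_le {g d : ℝ → ℝ} {L : ℝ}
    (hg : ∀ t, HasDerivAt g (d t) t) (hd : ∀ t, |d t - d 0| ≤ L * |t|) (t : ℝ) :
    g t ≤ g 0 + t * d 0 + L / 2 * t ^ 2 := by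
  set h : ℝ → ℝ := fun s => g 0 + s * d 0 + L / 2 * s ^ 2 - g s
  have hh : ∀ s, HasDerivAt h (d 0 + L * s - d s) s := fun s => by
    have hq := (((hasDerivAt_id s).mul_const (d 0)).const_add (g 0)).add
      ((hasDerivAt_pow 2 s).const_mul (L / 2))
    exact (hq.congr_deriv (by simp only [Nat.cast_ofNat]; ring)).sub (hg s)
  have hcont : Continuous h := continuous_iff_continuousAt.2 fun s => (hh s).continuousAt
  have hdiff : Differentiable ℝ h := fun s => (hh s).differentiableAt
  -- `h 0 = 0` and `h'` has the sign of its argument, so `h` is minimal at `0`.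
  suffices 0 ≤ h t by simp only [h] at this; linarith
  rcases le_total 0 t with ht | ht
  · have hmono : MonotoneOn h (Set.Ici 0) :=
      monotoneOn_of_deriv_nonneg (convex_Ici 0) hcont.continuousOn hdiff.differentiableOn
        fun s hs => by
          rw [interior_Ici, Set.mem_Ioi] at hs
          have := (abs_le.1 (hd s)).2
          rw [abs_of_pos hs] at this
          rw [(hh s).deriv]; linarith
    simpa [h] using hmono Set.self_mem_Ici ht ht
  · have hanti : AntitoneOn h (Set.Iic 0) :=
      antitoneOn_of_deriv_nonpos (convex_Iic 0) hcont.continuousOn hdiff.differentiableOn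
        fun s hs => by
          rw [interior_Iic, Set.mem_Iio] at hs
          have := (abs_le.1 (hd s)).1
          rw [abs_of_neg hs] at this
          rw [(hh s).deriv]; linarith
    simpa [h] using hanti ht Set.self_mem_Iic ht

lemma HasGradientAt.hasDerivAt_comp_add_smul {E : Type*} [NormedAddCommGroup E]
    [InnerProductSpace ℝ E] [CompleteSpace E] {f : E → ℝ} {f' x v : E} {t : ℝ}
    (hf : HasGradientAt f f' (x + t • v)) :
    HasDerivAt (fun s : ℝ => f (x + s • v)) ⟪f', v⟫ t := by
  have hline : HasDerivAt (fun s : ℝ => x + s • v) v t := by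
    simpa using ((hasDerivAt_id t).smul_const v).const_add x
  exact (hf.hasFDerivAt.comp_hasDerivAt t hline).congr_deriv
    (InnerProductSpace.toDual_apply_apply ..)

theorem gauss_southwell_descent_lemma_general {n : ℕ}
    (f : EuclideanSpace ℝ (Fin n) → ℝ)
    (f' : EuclideanSpace ℝ (Fin n) → EuclideanSpace ℝ (Fin n))
    (hf : ∀ x, HasGradientAt f (f' x) x)
    (L : ℝ)
    (hlip : ∀ (x : EuclideanSpace ℝ (Fin n)) (α : ℝ) (i : Fin n),
      |f' (x + α • EuclideanSpace.single i 1) i - f' x i| ≤ L * |α|)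
    (x : EuclideanSpace ℝ (Fin n)) (i : Fin n) :
    f (x - ((1 / L) * f' x i) • EuclideanSpace.single i 1)
      ≤ f x - 1 / (2 * L) * (f' x i) ^ 2 := by
  have hpartial : ∀ t, HasDerivAt (fun s : ℝ => f (x + s • EuclideanSpace.single i 1))
      (f' (x + t • EuclideanSpace.single i 1) i) t := fun t => by
    simpa [EuclideanSpace.inner_single_right] using
      (hf (x + t • EuclideanSpace.single i 1)).hasDerivAt_comp_add_smul
  have hstep := le_add_mul_add_sq_of_abs_deriv_sub_le hpartial
    (fun t => by simpa using hlip x t i) (-(1 / L * f' x i))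
  have hinv : L * L⁻¹ * L⁻¹ = L⁻¹ := by simpa only [inv_inv] using inv_mul_mul_self L⁻¹
  calc f (x - (1 / L * f' x i) • EuclideanSpace.single i 1)
      = f (x + -(1 / L * f' x i) • EuclideanSpace.single i 1) := by rw [neg_smul, ← sub_eq_add_neg]
    _ ≤ f x + -(1 / L * f' x i) * f' x i + L / 2 * (-(1 / L * f' x i)) ^ 2 := by
        simpa only [zero_smul, add_zero] using hstep
    _ = f x - 1 / (2 * L) * f' x i ^ 2 := by linear_combination f' x i ^ 2 / 2 * hinv

/-- coordinate descent progress bound under coordinate-wise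
`L`-Lipschitz continuity of the gradient. -/
theorem gauss_southwell_descent_lemma {n : ℕ}
    (f : EuclideanSpace ℝ (Fin n) → ℝ)
    (f' : EuclideanSpace ℝ (Fin n) → EuclideanSpace ℝ (Fin n))
    (hf : ∀ x, HasGradientAt f (f' x) x)
    (L : ℝ) (hL : 0 < L)
    (hlip : ∀ (x : EuclideanSpace ℝ (Fin n)) (α : ℝ) (i : Fin n),
      |f' (x + α • EuclideanSpace.single i 1) i - f' x i| ≤ L * |α|)
    (x : EuclideanSpace ℝ (Fin n)) (i : Fin n) :
    f (x - ((1 / L) * f' x i) • EuclideanSpace.single i 1)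
      ≤ f x - 1 / (2 * L) * (f' x i) ^ 2 :=
  gauss_southwell_descent_lemma_general f f' hf L hlip x i
end

section
/- Let f : ℝⁿ → ℝ be the quadratic function f(x) = (1/2)xᵀHx + bᵀx + c with diagonal positive-definite Hessian H = diag(λ₁, …, λₙ), λᵢ > 0 for all i. Then the largest constant μ₁ such that f(y) ≥ f(x) + ⟨∇f(x), y − x⟩ + (μ₁/2)‖y − x‖₁² for all x, y ∈ ℝⁿ is μ₁ = (Σᵢ 1/λᵢ)⁻¹. Equivalently, min over z ∈ ℝⁿ with ‖z‖₁ = 1 of zᵀHz equals (Σᵢ 1/λᵢ)⁻¹. -/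
open scoped RealInnerProductSpace

/-!
By weighted Cauchy–Schwarz, `(∑ |zᵢ|)² ≤ (∑ 1/λᵢ) · ∑ λᵢ zᵢ²`, with equality at `zᵢ ∝ 1/λᵢ`.
Since the Bregman gap `f y - f x - ⟪∇f x, y - x⟫` of the quadratic is `½ ∑ λᵢ (yᵢ - xᵢ)²`,
both the strong-convexity constant and the minimum of `zᵀHz` on the unit 1-sphere equal
`(∑ 1/λᵢ)⁻¹`.
-/

open Finset

section Weighted

variable {ι : Type*}

theorem sq_sum_abs_le_sum_inv_mul_sum_mul_sq (s : Finset ι) {w : ι → ℝ}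
    (hw : ∀ i ∈ s, 0 < w i) (z : ι → ℝ) :
    (∑ i ∈ s, |z i|) ^ 2 ≤ (∑ i ∈ s, (w i)⁻¹) * ∑ i ∈ s, w i * z i ^ 2 :=
  sum_sq_le_sum_mul_sum_of_sq_le_mul s (fun i hi => (inv_pos.2 (hw i hi)).le)
    (fun i hi => mul_nonneg (hw i hi).le (sq_nonneg _)) fun i hi => by
      rw [sq_abs, inv_mul_cancel_left₀ (hw i hi).ne']

variable [Fintype ι]

theorem inv_sum_inv_mul_sq_sum_abs_le {w : ι → ℝ} (hw : ∀ i, 0 < w i) (z : ι → ℝ) :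
    (∑ i, (w i)⁻¹)⁻¹ * (∑ i, |z i|) ^ 2 ≤ ∑ i, w i * z i ^ 2 := by
  have hcs := sq_sum_abs_le_sum_inv_mul_sum_mul_sq univ (fun i _ => hw i) z
  have hS : 0 ≤ ∑ i, (w i)⁻¹ := sum_nonneg fun i _ => (inv_pos.2 (hw i)).le
  rcases hS.eq_or_lt with hS0 | hSpos
  · rw [← hS0, inv_zero, zero_mul]
    exact sum_nonneg fun i _ => mul_nonneg (hw i).le (sq_nonneg _)
  · calc (∑ i, (w i)⁻¹)⁻¹ * (∑ i, |z i|) ^ 2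
        ≤ (∑ i, (w i)⁻¹)⁻¹ * ((∑ i, (w i)⁻¹) * ∑ i, w i * z i ^ 2) :=
          mul_le_mul_of_nonneg_left hcs (inv_nonneg.2 hS)
      _ = ∑ i, w i * z i ^ 2 := inv_mul_cancel_left₀ hSpos.ne' _

/-- The equality case of `sq_sum_abs_le_sum_inv_mul_sum_mul_sq`, normalized to `∑ |zᵢ| = 1`. -/
noncomputable def invWeightPoint (w : ι → ℝ) : EuclideanSpace ℝ ι :=
  WithLp.toLp 2 fun i => (w i)⁻¹ / ∑ j, (w j)⁻¹

variable [Nonempty ι] {w : ι → ℝ}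

theorem sum_inv_pos (hw : ∀ i, 0 < w i) : 0 < ∑ i, (w i)⁻¹ :=
  sum_pos (fun i _ => inv_pos.2 (hw i)) univ_nonempty

theorem sum_abs_invWeightPoint (hw : ∀ i, 0 < w i) : ∑ i, |invWeightPoint w i| = 1 := by
  have hS := sum_inv_pos hw
  simp only [invWeightPoint, PiLp.toLp_apply,
    abs_of_nonneg (div_nonneg (inv_pos.2 (hw _)).le hS.le), ← sum_div]
  exact div_self hS.ne'

theorem sum_mul_sq_invWeightPoint (hw : ∀ i, 0 < w i) :
    ∑ i, w i * invWeightPoint w i ^ 2 = (∑ i, (w i)⁻¹)⁻¹ := by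
  have hS := sum_inv_pos hw
  have hterm : ∀ i, w i * invWeightPoint w i ^ 2 = (w i)⁻¹ / (∑ j, (w j)⁻¹) ^ 2 := fun i => by
    simp only [invWeightPoint, PiLp.toLp_apply]
    field_simp [(hw i).ne']
  rw [sum_congr rfl fun i _ => hterm i, ← sum_div]
  field_simp

theorem isLeast_sum_mul_sq_of_sum_abs_eq_one (hw : ∀ i, 0 < w i) :
    IsLeast {v : ℝ | ∃ z : EuclideanSpace ℝ ι, (∑ i, |z i|) = 1 ∧ v = ∑ i, w i * (z i) ^ 2}
      ((∑ i, (w i)⁻¹)⁻¹) := by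
  refine ⟨⟨invWeightPoint w, sum_abs_invWeightPoint hw, (sum_mul_sq_invWeightPoint hw).symm⟩, ?_⟩
  rintro v ⟨z, hz, rfl⟩
  simpa [hz] using inv_sum_inv_mul_sq_sum_abs_le hw z

end Weighted

theorem separable_quadratic_sub_sub_inner {ι : Type*} [Fintype ι] (lam b : ι → ℝ) (c : ℝ)
    {f : EuclideanSpace ℝ ι → ℝ}
    (hf : ∀ x, f x = (1 / 2) * ∑ i, lam i * (x i) ^ 2 + ∑ i, b i * x i + c)
    {f' : EuclideanSpace ℝ ι → EuclideanSpace ℝ ι} (hf' : ∀ x i, f' x i = lam i * x i + b i)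
    (x y : EuclideanSpace ℝ ι) :
    f y - f x - ⟪f' x, y - x⟫ = (1 / 2) * ∑ i, lam i * (y i - x i) ^ 2 := by
  simp only [hf, PiLp.inner_apply, hf', PiLp.sub_apply, RCLike.inner_apply, conj_trivial,
    mul_sum, ← sum_sub_distrib, add_sub_add_right_eq_sub, ← sum_add_distrib]
  exact sum_congr rfl fun i _ => by ring

/-- for a separable quadratic with diagonal positive-definite
Hessian `diag(λ₁,…,λₙ)`, the largest 1-norm strong-convexity constant is the
inverse of `∑ᵢ 1/λᵢ`; equivalently `min_{‖z‖₁=1} zᵀHz = (∑ᵢ 1/λᵢ)⁻¹`. -/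
theorem separable_quadratic_one_norm_constant {n : ℕ} (hn : 0 < n)
    (lam : Fin n → ℝ) (hlam : ∀ i, 0 < lam i)
    (b : Fin n → ℝ) (c : ℝ)
    (f : EuclideanSpace ℝ (Fin n) → ℝ)
    (hfdef : ∀ x, f x = (1 / 2) * ∑ i, lam i * (x i) ^ 2 + ∑ i, b i * x i + c)
    (f' : EuclideanSpace ℝ (Fin n) → EuclideanSpace ℝ (Fin n))
    (hf'def : ∀ x i, f' x i = lam i * x i + b i) :
    IsGreatest {μ₁ : ℝ | ∀ x y,
        f y ≥ f x + ⟪f' x, y - x⟫ + μ₁ / 2 * (∑ i, |y i - x i|) ^ 2}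
      ((∑ i, (lam i)⁻¹)⁻¹) ∧
    IsLeast {v : ℝ | ∃ z : EuclideanSpace ℝ (Fin n),
        (∑ i, |z i|) = 1 ∧ v = ∑ i, lam i * (z i) ^ 2}
      ((∑ i, (lam i)⁻¹)⁻¹) := by
  have : Nonempty (Fin n) := ⟨⟨0, hn⟩⟩
  have hgap := separable_quadratic_sub_sub_inner lam b c hfdef hf'def
  refine ⟨⟨fun x y => ?_, fun μ hμ => ?_⟩, isLeast_sum_mul_sq_of_sum_abs_eq_one hlam⟩
  · have := inv_sum_inv_mul_sq_sum_abs_le hlam fun i => y i - x i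
    linarith [hgap x y]
  · have hμz := hμ 0 (invWeightPoint lam)
    have hgapz := hgap 0 (invWeightPoint lam)
    simp only [PiLp.zero_apply, sub_zero, sum_abs_invWeightPoint hlam,
      sum_mul_sq_invWeightPoint hlam] at hμz hgapz
    linarith
end

section
/- Let f : ℝⁿ → ℝ be differentiable with coordinate-wise L-Lipschitz continuous gradient and μ₁-strongly convex with respect to the 1-norm (μ₁ > 0), with minimizer x*. Suppose the coordinate i_k satisfies the multiplicative-error approximate Gauss-Southwell condition |∇_{i_k}f(x^k)| ≥ (1 − ε_k)‖∇f(x^k)‖∞ for some ε_k ∈ [0, 1), and x^{k+1} = x^k − (1/L)∇_{i_k}f(x^k)e_{i_k}. Then f(x^{k+1}) − f(x*) ≤ (1 − μ₁(1 − ε_k)²/L)(f(x^k) − f(x*)). -/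
/-!
Along the coordinate direction `eᵢ` the gradient is `L`-Lipschitz, so the coordinate step of
length `∇ᵢf(x)/L` decreases `f` by at least `(∇ᵢf(x))² / (2L)`. Strong convexity in the 1-norm,
combined with Hölder's inequality `⟪g, y - x⟫ ≥ -‖g‖∞ ‖y - x‖₁`, gives the Polyak–Łojasiewicz
inequality `2μ₁ (f(x) - f(y)) ≤ ‖∇f(x)‖∞²`, and the selection rule gives
`(1 - ε)² ‖∇f(x)‖∞² ≤ (∇ᵢf(x))²`.
-/

open scoped RealInnerProductSpace

lemma quadratic_upper_bound_of_abs_deriv_sub_le_of_nonneg {φ φ' : ℝ → ℝ} {L : ℝ}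
    (hφ : ∀ t, HasDerivAt φ (φ' t) t) (hlip : ∀ t, |φ' t - φ' 0| ≤ L * |t|)
    {s : ℝ} (hs : 0 ≤ s) : φ s ≤ φ 0 + φ' 0 * s + L / 2 * s ^ 2 := by
  set χ : ℝ → ℝ := fun t => φ t - φ' 0 * t - L / 2 * t ^ 2
  have hχ : ∀ t, HasDerivAt χ (φ' t - φ' 0 - L * t) t := fun t => by
    refine (((hφ t).sub ((hasDerivAt_id' t).const_mul (φ' 0))).sub
      ((hasDerivAt_pow 2 t).const_mul (L / 2))).congr_deriv ?_
    ring
  have hanti : AntitoneOn χ (Set.Ici 0) := by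
    refine antitoneOn_of_hasDerivWithinAt_nonpos (convex_Ici 0)
      (fun t _ => (hχ t).continuousAt.continuousWithinAt) (fun t _ => (hχ t).hasDerivWithinAt) ?_
    intro t ht
    rw [interior_Ici, Set.mem_Ioi] at ht
    have hderiv_le := (abs_le.mp (hlip t)).2
    rw [abs_of_pos ht] at hderiv_le
    linarith
  have hχs := hanti Set.self_mem_Ici hs hs
  simp only [χ] at hχs
  linarith

lemma quadratic_upper_bound_of_abs_deriv_sub_le {φ φ' : ℝ → ℝ} {L : ℝ}
    (hφ : ∀ t, HasDerivAt φ (φ' t) t) (hlip : ∀ t, |φ' t - φ' 0| ≤ L * |t|) (s : ℝ) :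
    φ s ≤ φ 0 + φ' 0 * s + L / 2 * s ^ 2 := by
  rcases le_total 0 s with hs | hs
  · exact quadratic_upper_bound_of_abs_deriv_sub_le_of_nonneg hφ hlip hs
  · have hφneg : ∀ t, HasDerivAt (fun t => φ (-t)) (-φ' (-t)) t := fun t => by
      simpa [Function.comp_def] using (hφ (-t)).comp t (hasDerivAt_neg t)
    have hlipneg : ∀ t, |-φ' (-t) - -φ' (-0)| ≤ L * |t| := fun t => by
      rw [neg_zero, ← abs_neg, neg_sub_neg, neg_sub, ← abs_neg t]
      exact hlip (-t)
    have := quadratic_upper_bound_of_abs_deriv_sub_le_of_nonneg hφneg hlipneg (neg_nonneg.mpr hs)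
    simp only [neg_neg, neg_zero] at this
    linarith

section Coordinates

variable {ι : Type*} [Fintype ι]

lemma abs_inner_le_iSup_abs_mul_sum_abs (u v : EuclideanSpace ℝ ι) :
    |⟪u, v⟫| ≤ (⨆ j, |u j|) * ∑ i, |v i| := by
  have hbdd : BddAbove (Set.range fun j => |u j|) := (Set.finite_range _).bddAbove
  rw [PiLp.inner_apply, Finset.mul_sum]
  refine (Finset.abs_sum_le_sum_abs _ _).trans (Finset.sum_le_sum fun i _ => ?_)
  rw [RCLike.inner_apply, conj_trivial, abs_mul, mul_comm]
  exact mul_le_mul_of_nonneg_right (le_ciSup hbdd i) (abs_nonneg _)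

lemma two_mul_mul_sub_le_iSup_abs_sq_of_strongConvex_l1 {f : EuclideanSpace ℝ ι → ℝ}
    {g x y : EuclideanSpace ℝ ι} {μ : ℝ} (hμ : 0 ≤ μ)
    (hsc : f y ≥ f x + ⟪g, y - x⟫ + μ / 2 * (∑ i, |y i - x i|) ^ 2) :
    2 * μ * (f x - f y) ≤ (⨆ j, |g j|) ^ 2 := by
  set M := ⨆ j, |g j|
  set S := ∑ i, |y i - x i|
  have hinner : -(M * S) ≤ ⟪g, y - x⟫ :=
    neg_le_of_abs_le (abs_inner_le_iSup_abs_mul_sum_abs g _)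
  have hgap : f x - f y ≤ M * S - μ / 2 * S ^ 2 := by linarith
  -- `2μ (M S - μ S² / 2) = M² - (M - μ S)²`
  nlinarith [mul_le_mul_of_nonneg_left hgap (by linarith : 0 ≤ 2 * μ), sq_nonneg (M - μ * S)]

variable [DecidableEq ι]

lemma hasDerivAt_comp_add_smul_single {f : EuclideanSpace ℝ ι → ℝ}
    {f' : EuclideanSpace ℝ ι → EuclideanSpace ℝ ι} (hf : ∀ x, HasGradientAt f (f' x) x)
    (x : EuclideanSpace ℝ ι) (i : ι) (t : ℝ) :
    HasDerivAt (fun t : ℝ => f (x + t • EuclideanSpace.single i 1))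
      (f' (x + t • EuclideanSpace.single i 1) i) t := by
  have hline : HasDerivAt (fun t : ℝ => x + t • EuclideanSpace.single i (1 : ℝ))
      (EuclideanSpace.single i 1) t := by
    simpa using ((hasDerivAt_id t).smul_const (EuclideanSpace.single i (1 : ℝ))).const_add x
  have h := (hf (x + t • EuclideanSpace.single i 1)).hasFDerivAt.comp_hasDerivAt t hline
  simp only [InnerProductSpace.toDual_apply_apply, EuclideanSpace.inner_single_right, one_mul,
    conj_trivial] at h
  exact h

lemma coordinate_descent_step_le {f : EuclideanSpace ℝ ι → ℝ}
    {f' : EuclideanSpace ℝ ι → EuclideanSpace ℝ ι} (hf : ∀ x, HasGradientAt f (f' x) x)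
    {L : ℝ} (hL : L ≠ 0) {x : EuclideanSpace ℝ ι} {i : ι}
    (hlip : ∀ α : ℝ, |f' (x + α • EuclideanSpace.single i 1) i - f' x i| ≤ L * |α|) :
    f (x - ((1 / L) * f' x i) • EuclideanSpace.single i 1) ≤ f x - f' x i ^ 2 / (2 * L) := by
  have h := quadratic_upper_bound_of_abs_deriv_sub_le (hasDerivAt_comp_add_smul_single hf x i)
    (by simpa using hlip) (-(f' x i / L))
  rw [sub_eq_add_neg, ← neg_smul, one_div_mul_eq_div]
  calc _ ≤ _ := h
    _ = f x - f' x i ^ 2 / (2 * L) := by simp only [zero_smul, add_zero]; field_simp; ring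

end Coordinates

theorem approx_gauss_southwell_multiplicative_general {n : ℕ}
    (f : EuclideanSpace ℝ (Fin n) → ℝ)
    (f' : EuclideanSpace ℝ (Fin n) → EuclideanSpace ℝ (Fin n))
    (hf : ∀ x, HasGradientAt f (f' x) x)
    (L : ℝ) (hL : 0 < L)
    (hlip : ∀ (x : EuclideanSpace ℝ (Fin n)) (α : ℝ) (i : Fin n),
      |f' (x + α • EuclideanSpace.single i 1) i - f' x i| ≤ L * |α|)
    (μ₁ : ℝ) (hμ₁ : 0 < μ₁)
    (hsc : ∀ x y, f y ≥ f x + ⟪f' x, y - x⟫ + μ₁ / 2 * (∑ i, |y i - x i|) ^ 2)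
    (xs : EuclideanSpace ℝ (Fin n))
    (ε : ℝ) (hε1 : ε < 1)
    (xk : EuclideanSpace ℝ (Fin n)) (ik : Fin n)
    (hik : |f' xk ik| ≥ (1 - ε) * ⨆ j, |f' xk j|)
    (xk1 : EuclideanSpace ℝ (Fin n))
    (hstep : xk1 = xk - ((1 / L) * f' xk ik) • EuclideanSpace.single ik 1) :
    f xk1 - f xs ≤ (1 - μ₁ * (1 - ε) ^ 2 / L) * (f xk - f xs) := by
  set M := ⨆ j, |f' xk j|
  have hdescent : f xk1 ≤ f xk - f' xk ik ^ 2 / (2 * L) :=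
    hstep ▸ coordinate_descent_step_le hf hL.ne' (hlip xk · ik)
  have hPL : 2 * μ₁ * (f xk - f xs) ≤ M ^ 2 :=
    two_mul_mul_sub_le_iSup_abs_sq_of_strongConvex_l1 hμ₁.le (hsc xk xs)
  have hselect : (1 - ε) ^ 2 * M ^ 2 ≤ f' xk ik ^ 2 := by
    rw [← mul_pow, ← sq_abs (f' xk ik)]
    have hM : 0 ≤ M := Real.iSup_nonneg fun _ => abs_nonneg _
    exact pow_le_pow_left₀ (mul_nonneg (sub_nonneg.mpr hε1.le) hM) hik 2
  have hgain : μ₁ * (1 - ε) ^ 2 / L * (f xk - f xs) ≤ f' xk ik ^ 2 / (2 * L) := by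
    rw [div_mul_eq_mul_div, div_le_div_iff₀ hL (by positivity)]
    nlinarith [mul_le_mul_of_nonneg_left hPL (sq_nonneg (1 - ε))]
  linarith

/-- convergence rate of the approximate Gauss-Southwell rule with
multiplicative error `ε_k`. -/
theorem approx_gauss_southwell_multiplicative {n : ℕ}
    (f : EuclideanSpace ℝ (Fin n) → ℝ)
    (f' : EuclideanSpace ℝ (Fin n) → EuclideanSpace ℝ (Fin n))
    (hf : ∀ x, HasGradientAt f (f' x) x)
    (L : ℝ) (hL : 0 < L)
    (hlip : ∀ (x : EuclideanSpace ℝ (Fin n)) (α : ℝ) (i : Fin n),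
      |f' (x + α • EuclideanSpace.single i 1) i - f' x i| ≤ L * |α|)
    (μ₁ : ℝ) (hμ₁ : 0 < μ₁)
    (hsc : ∀ x y, f y ≥ f x + ⟪f' x, y - x⟫ + μ₁ / 2 * (∑ i, |y i - x i|) ^ 2)
    (xs : EuclideanSpace ℝ (Fin n)) (hxs : ∀ y, f xs ≤ f y)
    (ε : ℝ) (hε0 : 0 ≤ ε) (hε1 : ε < 1)
    (xk : EuclideanSpace ℝ (Fin n)) (ik : Fin n)
    (hik : |f' xk ik| ≥ (1 - ε) * ⨆ j, |f' xk j|)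
    (xk1 : EuclideanSpace ℝ (Fin n))
    (hstep : xk1 = xk - ((1 / L) * f' xk ik) • EuclideanSpace.single ik 1) :
    f xk1 - f xs ≤ (1 - μ₁ * (1 - ε) ^ 2 / L) * (f xk - f xs) :=
  approx_gauss_southwell_multiplicative_general f f' hf L hL hlip μ₁ hμ₁ hsc xs ε hε1 xk ik hik xk1
    hstep
end

section
/- Let f : ℝⁿ → ℝ be convex and differentiable with ∇f L₁-Lipschitz continuous in the 1-norm, i.e., ‖∇f(x) − ∇f(y)‖∞ ≤ L₁‖x − y‖₁ for all x, y ∈ ℝⁿ. Then f(y) ≥ f(x) + ⟨∇f(x), y − x⟩ + (1/(2L₁))‖∇f(y) − ∇f(x)‖∞² for all x, y ∈ ℝⁿ. In particular, if x* is a minimizer of f, then ‖∇f(x)‖∞ ≤ √(2L₁(f(x) − f(x*))) for all x. -/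
/-!
The argument is Nesterov's co-coercivity argument, which works in any real normed space once the
Lipschitz bound on the derivative is measured in the dual norm. Convexity gives the tangent lower
bound at `x`, and the Lipschitz derivative gives the quadratic upper bound
`f z ≤ f y + f' y (z - y) + L/2 ‖z - y‖²`. Comparing the two at `z = y - (s / L) v`, where
`s = (f' y - f' x) v` for a unit vector `v`, yields `s² ≤ 2L (f y - f x - f' x (y - x))`; taking
the supremum over `v` gives the dual norm of `f' y - f' x`. On `ℝⁿ` with the 1-norm that dual norm
is the sup-norm of the gradient, and at a minimiser the gradient vanishes.
-/

open Set
open scoped RealInnerProductSpace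

section NormedSpace

variable {E : Type*} [NormedAddCommGroup E] [NormedSpace ℝ E]

theorem ConvexOn.tangent_le_of_hasFDerivAt {s : Set E} {f : E → ℝ} {f' : StrongDual ℝ E}
    {x y : E} (hconv : ConvexOn ℝ s f) (hx : x ∈ s) (hy : y ∈ s) (hf : HasFDerivAt f f' x) :
    f x + f' (y - x) ≤ f y := by
  let γ : ℝ →ᵃ[ℝ] E := AffineMap.lineMap x y
  have hderiv : HasDerivAt (f ∘ γ) (f' (y - x)) 0 := by
    have hf0 : HasFDerivAt f f' (γ 0) := by simpa [γ] using hf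
    exact hf0.comp_hasDerivAt (0 : ℝ) AffineMap.hasDerivAt_lineMap
  have hslope := (hconv.comp_affineMap γ).le_slope_of_hasDerivAt (x := 0) (y := 1)
    (by simpa [γ] using hx) (by simpa [γ] using hy) zero_lt_one hderiv
  simp only [slope_def_field, γ, AffineMap.lineMap_apply_zero, AffineMap.lineMap_apply_one,
    Function.comp_apply, sub_zero, div_one] at hslope
  linarith

theorem le_tangent_add_of_norm_fderiv_sub_le {f : E → ℝ} {f' : E → StrongDual ℝ E} {L : ℝ}
    (hf : ∀ x, HasFDerivAt f (f' x) x) (hlip : ∀ x y, ‖f' x - f' y‖ ≤ L * ‖x - y‖) (x y : E) :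
    f y ≤ f x + f' x (y - x) + L / 2 * ‖y - x‖ ^ 2 := by
  let γ : ℝ →ᵃ[ℝ] E := AffineMap.lineMap x y
  let φ : ℝ → ℝ := fun t ↦ f (γ t) - t * f' x (y - x) - L / 2 * ‖y - x‖ ^ 2 * t ^ 2
  let φ' : ℝ → ℝ := fun t ↦ (f' (γ t) - f' x) (y - x) - L * ‖y - x‖ ^ 2 * t
  have hφ : ∀ t, HasDerivAt φ (φ' t) t := fun t ↦ by
    refine ((((hf (γ t)).comp_hasDerivAt t AffineMap.hasDerivAt_lineMap).sub
      ((hasDerivAt_id t).mul_const (f' x (y - x)))).sub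
      ((hasDerivAt_pow 2 t).const_mul (L / 2 * ‖y - x‖ ^ 2))).congr_deriv ?_
    simp only [φ', FunLike.coe_sub, Pi.sub_apply]
    push_cast
    ring
  have hφ'_nonpos : ∀ t ∈ interior (Icc (0 : ℝ) 1), φ' t ≤ 0 := by
    intro t ht
    rw [interior_Icc] at ht
    have hγt : γ t - x = t • (y - x) := AffineMap.lineMap_vsub_left x y t
    have key : (f' (γ t) - f' x) (y - x) ≤ L * ‖y - x‖ ^ 2 * t := calc
      _ ≤ ‖f' (γ t) - f' x‖ * ‖y - x‖ := le_of_abs_le ((f' (γ t) - f' x).le_opNorm _)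
      _ ≤ L * ‖γ t - x‖ * ‖y - x‖ := by gcongr; exact hlip _ _
      _ = L * ‖y - x‖ ^ 2 * t := by
        rw [hγt, norm_smul, Real.norm_of_nonneg ht.1.le]; ring
    simp only [φ']
    linarith
  have hanti : AntitoneOn φ (Icc 0 1) :=
    antitoneOn_of_hasDerivWithinAt_nonpos (convex_Icc 0 1)
      (fun t _ ↦ (hφ t).continuousAt.continuousWithinAt)
      (fun t _ ↦ (hφ t).hasDerivWithinAt) hφ'_nonpos
  have h10 := hanti (by norm_num) (by norm_num) zero_le_one
  simp only [φ, γ, AffineMap.lineMap_apply_zero, AffineMap.lineMap_apply_one] at h10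
  linarith

theorem ConvexOn.tangent_add_sq_norm_fderiv_sub_le {f : E → ℝ} {f' : E → StrongDual ℝ E} {L : ℝ}
    (hconv : ConvexOn ℝ univ f) (hf : ∀ x, HasFDerivAt f (f' x) x)
    (hlip : ∀ x y, ‖f' x - f' y‖ ≤ L * ‖x - y‖) (hL : 0 < L) (x y : E) :
    f x + f' x (y - x) + 1 / (2 * L) * ‖f' y - f' x‖ ^ 2 ≤ f y := by
  set Δ := f y - f x - f' x (y - x)
  have hunit : ∀ v, ‖v‖ = 1 → ‖(f' y - f' x) v‖ ≤ √(2 * L * Δ) := by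
    intro v hv
    set s := (f' y - f' x) v
    -- `y + w` minimises the quadratic upper bound at `y` along the line through `v`
    set w := -(s / L) • v
    have hlower := hconv.tangent_le_of_hasFDerivAt trivial trivial (hf x) (y := y + w)
    have hupper := le_tangent_add_of_norm_fderiv_sub_le hf hlip y (y + w)
    have hgw : f' y w - f' x w = -(s ^ 2 / L) := by
      rw [← sub_apply, map_smul, smul_eq_mul]; ring
    have hw : ‖w‖ ^ 2 = s ^ 2 / L ^ 2 := by
      rw [norm_smul, hv, mul_one, norm_neg, Real.norm_eq_abs, abs_div, abs_of_pos hL, div_pow,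
        sq_abs]
    rw [add_sub_cancel_left, hw] at hupper
    rw [show y + w - x = w + (y - x) by abel, map_add] at hlower
    have hquad : -(s ^ 2 / L) + L / 2 * (s ^ 2 / L ^ 2) = -(1 / (2 * L) * s ^ 2) := by
      field_simp; ring
    have hs : 1 / (2 * L) * s ^ 2 ≤ Δ := by linarith
    refine Real.abs_le_sqrt ?_
    calc s ^ 2 = 2 * L * (1 / (2 * L) * s ^ 2) := by field_simp
      _ ≤ 2 * L * Δ := by gcongr
  have hΔ_nonneg : 0 ≤ Δ := by
    linarith [hconv.tangent_le_of_hasFDerivAt trivial trivial (hf x) (y := y)]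
  have hnorm : ‖f' y - f' x‖ ^ 2 ≤ 2 * L * Δ := (Real.le_sqrt (norm_nonneg _) (by positivity)).1
    (ContinuousLinearMap.opNorm_le_of_unit_norm (Real.sqrt_nonneg _) hunit)
  have hgap : 1 / (2 * L) * ‖f' y - f' x‖ ^ 2 ≤ Δ := calc
    _ ≤ 1 / (2 * L) * (2 * L * Δ) := by gcongr
    _ = Δ := by field_simp
  linarith

end NormedSpace

theorem PiLp.opNorm_eq_iSup_norm_single {𝕜 ι F : Type*} [NontriviallyNormedField 𝕜] [Fintype ι]
    [DecidableEq ι] [NormedAddCommGroup F] [NormedSpace 𝕜 F]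
    (g : PiLp 1 (fun _ : ι ↦ 𝕜) →L[𝕜] F) : ‖g‖ = ⨆ i, ‖g (PiLp.single 1 i 1)‖ := by
  set S := ⨆ i, ‖g (PiLp.single 1 i 1)‖
  refine le_antisymm (g.opNorm_le_bound (Real.iSup_nonneg fun _ ↦ norm_nonneg _) fun x ↦ ?_)
    (Real.iSup_le (fun i ↦ (g.le_opNorm _).trans (by simp)) (norm_nonneg g))
  calc ‖g x‖ = ‖∑ i, x i • g (PiLp.single 1 i 1)‖ := by
        conv_lhs => rw [← (PiLp.basisFun 1 𝕜 ι).sum_repr x]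
        simp
    _ ≤ ∑ i, ‖x i‖ * S := by
        refine norm_sum_le_of_le _ fun i _ ↦ ?_
        rw [norm_smul]
        gcongr
        exact le_ciSup (f := fun i ↦ ‖g (PiLp.single 1 i 1)‖) (Set.finite_range _).bddAbove i
    _ = S * ‖x‖ := by rw [PiLp.norm_eq_of_L1, Finset.mul_sum]; simp_rw [mul_comm]

section L1Euclidean

variable (ι : Type*)

noncomputable def l1EquivEuclideanSpace : PiLp 1 (fun _ : ι ↦ ℝ) ≃L[ℝ] EuclideanSpace ℝ ι :=
  (PiLp.continuousLinearEquiv 1 ℝ _).trans (PiLp.continuousLinearEquiv 2 ℝ _).symm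

variable {ι}

@[simp]
theorem l1EquivEuclideanSpace_single [DecidableEq ι] (i : ι) (a : ℝ) :
    l1EquivEuclideanSpace ι (PiLp.single 1 i a) = EuclideanSpace.single i a := rfl

theorem norm_toDual_comp_l1EquivEuclideanSpace [Fintype ι] (g : EuclideanSpace ℝ ι) :
    ‖(InnerProductSpace.toDual ℝ _ g).comp (l1EquivEuclideanSpace ι).toContinuousLinearMap‖ =
      ⨆ i, |g i| := by
  classical
  rw [PiLp.opNorm_eq_iSup_norm_single]
  congr! with i
  simp [EuclideanSpace.inner_single_right]

end L1Euclidean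

theorem ConvexOn.inner_gradient_add_sq_iSup_abs_le {ι : Type*} [Fintype ι]
    {f : EuclideanSpace ℝ ι → ℝ} {f' : EuclideanSpace ℝ ι → EuclideanSpace ℝ ι} {L : ℝ}
    (hconv : ConvexOn ℝ univ f) (hf : ∀ x, HasGradientAt f (f' x) x)
    (hlip : ∀ x y : EuclideanSpace ℝ ι, (⨆ i, |f' x i - f' y i|) ≤ L * ∑ i, |x i - y i|)
    (hL : 0 < L) (x y : EuclideanSpace ℝ ι) :
    f x + ⟪f' x, y - x⟫ + 1 / (2 * L) * (⨆ i, |f' y i - f' x i|) ^ 2 ≤ f y := by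
  let e := l1EquivEuclideanSpace ι
  let F' : PiLp 1 (fun _ : ι ↦ ℝ) → StrongDual ℝ (PiLp 1 fun _ : ι ↦ ℝ) := fun z ↦
    (InnerProductSpace.toDual ℝ _ (f' (e z))).comp e.toContinuousLinearMap
  have hF : ∀ z, HasFDerivAt (f ∘ e) (F' z) z := fun z ↦
    (hf (e z)).hasFDerivAt.comp z e.hasFDerivAt
  have hnorm : ∀ z w, ‖F' z - F' w‖ = ⨆ i, |f' (e z) i - f' (e w) i| := by
    intro z w
    rw [← ContinuousLinearMap.sub_comp, ← map_sub, norm_toDual_comp_l1EquivEuclideanSpace]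
    simp
  have hFlip : ∀ z w, ‖F' z - F' w‖ ≤ L * ‖z - w‖ := fun z w ↦ by
    rw [hnorm, PiLp.norm_eq_of_L1]
    exact hlip (e z) (e w)
  have h := (hconv.comp_linearMap e.toLinearMap).tangent_add_sq_norm_fderiv_sub_le hF hFlip hL
    (e.symm x) (e.symm y)
  rw [hnorm] at h
  simpa [F'] using h

/-- for a convex function with `L₁`-Lipschitz gradient in the
1-norm, the co-coercivity-type lower bound holds, and at a minimizer `x*` we
get `‖∇f(x)‖∞ ≤ √(2L₁(f(x) − f(x*)))`. -/
theorem one_norm_lipschitz_lower_bound {n : ℕ}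
    (f : EuclideanSpace ℝ (Fin n) → ℝ)
    (hconv : ConvexOn ℝ Set.univ f)
    (f' : EuclideanSpace ℝ (Fin n) → EuclideanSpace ℝ (Fin n))
    (hf : ∀ x, HasGradientAt f (f' x) x)
    (L₁ : ℝ) (hL₁ : 0 < L₁)
    (hlip : ∀ x y : EuclideanSpace ℝ (Fin n),
      (⨆ i, |f' x i - f' y i|) ≤ L₁ * ∑ i, |x i - y i|) :
    (∀ x y : EuclideanSpace ℝ (Fin n),
      f y ≥ f x + ⟪f' x, y - x⟫ + 1 / (2 * L₁) * (⨆ i, |f' y i - f' x i|) ^ 2) ∧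
    (∀ xs : EuclideanSpace ℝ (Fin n), (∀ y, f xs ≤ f y) →
      ∀ x, (⨆ i, |f' x i|) ≤ Real.sqrt (2 * L₁ * (f x - f xs))) := by
  have key := hconv.inner_gradient_add_sq_iSup_abs_le hf hlip hL₁
  refine ⟨fun x y ↦ key x y, fun xs hmin x ↦ ?_⟩
  have hxs : f' xs = 0 := by
    simpa using IsLocalMin.hasFDerivAt_eq_zero (.of_forall hmin) (hf xs).hasFDerivAt
  have h := key xs x
  simp only [hxs, inner_zero_left, add_zero, PiLp.zero_apply, sub_zero] at h
  apply Real.le_sqrt_of_sq_le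
  calc (⨆ i, |f' x i|) ^ 2 = 2 * L₁ * (1 / (2 * L₁) * (⨆ i, |f' x i|) ^ 2) := by field_simp
    _ ≤ 2 * L₁ * (f x - f xs) := by gcongr; linarith
end

section
/- Let F(x) = f(Ax) where A is an m × n real matrix with nonzero columns a₁, …, aₙ and f : ℝᵐ → ℝ is differentiable, and suppose the coordinate-wise Lipschitz constants satisfy Lᵢ = γ‖aᵢ‖² for a fixed γ > 0. Let r = ∇f(Ax) ∈ ℝᵐ, so that ∇ᵢF(x) = aᵢᵀr. Then the Gauss-Southwell-Lipschitz rule argmax_{i ∈ {1,…,n}} |∇ᵢF(x)|/√(Lᵢ) coincides with the normalized nearest-neighbour rule: i maximizes |aᵢᵀr|/‖aᵢ‖, which is attained by minimizing ‖r − σ aᵢ/‖aᵢ‖‖ over i ∈ {1,…,n} and signs σ ∈ {−1, +1}. That is, if (i*, σ*) minimizes ‖r − σ aᵢ/‖aᵢ‖‖ over all i and σ ∈ {−1, +1}, then i* maximizes |aᵢᵀr|/(√γ ‖aᵢ‖) = |∇ᵢF(x)|/√(Lᵢ). -/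
open scoped RealInnerProductSpace

/-- when `Lᵢ = γ‖aᵢ‖²`, the Gauss-Southwell-Lipschitz rule for
`F(x) = f(Ax)` coincides with the normalized nearest-neighbour rule: the pair
`(i*, σ*)` minimizing `‖r − σ aᵢ/‖aᵢ‖‖` yields a maximizer of
`|aᵢᵀr|/√(Lᵢ) = |∇ᵢF(x)|/√(Lᵢ)`. -/
theorem gsl_rule_as_normalized_nns {m n : ℕ}
    (a : Fin n → EuclideanSpace ℝ (Fin m)) (ha : ∀ i, a i ≠ 0)
    (f : EuclideanSpace ℝ (Fin m) → ℝ)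
    (f' : EuclideanSpace ℝ (Fin m) → EuclideanSpace ℝ (Fin m))
    (hf : ∀ y, HasGradientAt f (f' y) y)
    (γ : ℝ) (hγ : 0 < γ)
    (L : Fin n → ℝ) (hLdef : ∀ i, L i = γ * ‖a i‖ ^ 2)
    (x : Fin n → ℝ) (r : EuclideanSpace ℝ (Fin m))
    (hr : r = f' (∑ i, x i • a i))
    (istar : Fin n) (σstar : ℝ) (hσ : σstar = 1 ∨ σstar = -1)
    (hmin : ∀ (j : Fin n) (σ : ℝ), (σ = 1 ∨ σ = -1) →
      ‖r - σstar • (‖a istar‖⁻¹ • a istar)‖ ≤ ‖r - σ • (‖a j‖⁻¹ • a j)‖) :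
    ∀ j : Fin n,
      |⟪a j, r⟫| / Real.sqrt (L j) ≤ |⟪a istar, r⟫| / Real.sqrt (L istar) := by

  intro j
  have hne : ∀ i, ‖a i‖ ≠ 0 := fun i => norm_ne_zero_iff.mpr (ha i)
  set u : Fin n → EuclideanSpace ℝ (Fin m) := fun i => ‖a i‖⁻¹ • a i with hu
  have hun : ∀ i, ‖u i‖ = 1 := by
    intro i
    simp [hu, norm_smul, abs_of_nonneg (inv_nonneg.mpr (norm_nonneg (a i))),
      inv_mul_cancel₀ (hne i)]
  set σj : ℝ := if 0 ≤ ⟪r, u j⟫ then 1 else -1 with hσj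
  have hσjmem : σj = 1 ∨ σj = -1 := by unfold σj; split <;> simp
  have key : ∀ (i : Fin n) (σ : ℝ), σ = 1 ∨ σ = -1 →
      ‖r - σ • u i‖ ^ 2 = ‖r‖ ^ 2 + 1 - 2 * (σ * ⟪r, u i⟫) := by
    intro i σ hσi
    have h1 : ‖σ • u i‖ = 1 := by
      rcases hσi with h | h <;> simp [h, norm_smul, hun i]
    rw [norm_sub_sq_real, h1, real_inner_smul_right]
    ring
  have hle := hmin j σj hσjmem
  have hsq : ‖r - σstar • u istar‖ ^ 2 ≤ ‖r - σj • u j‖ ^ 2 :=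
    pow_le_pow_left₀ (norm_nonneg _) hle 2
  rw [key istar σstar hσ, key j σj hσjmem] at hsq
  have h2 : σj * ⟪r, u j⟫ ≤ σstar * ⟪r, u istar⟫ := by linarith
  have h3 : σj * ⟪r, u j⟫ = |⟪r, u j⟫| := by
    unfold σj; split <;> rename_i h
    · rw [abs_of_nonneg h]; ring
    · rw [abs_of_neg (lt_of_not_ge h)]; ring
  have h4 : σstar * ⟪r, u istar⟫ ≤ |⟪r, u istar⟫| := by
    rcases hσ with h | h
    · rw [h, one_mul]; exact le_abs_self _
    · rw [h]; rw [neg_one_mul]; exact neg_le_abs _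
  have hmain : |⟪r, u j⟫| ≤ |⟪r, u istar⟫| := by linarith
  have hinner : ∀ i, ⟪r, u i⟫ = ⟪a i, r⟫ / ‖a i‖ := by
    intro i
    rw [hu]
    simp only [real_inner_smul_right]
    rw [real_inner_comm]
    field_simp
  have habs : ∀ i, |⟪a i, r⟫| / Real.sqrt (L i) = |⟪r, u i⟫| / Real.sqrt γ := by
    intro i
    rw [hinner i, hLdef i, Real.sqrt_mul hγ.le, Real.sqrt_sq (norm_nonneg (a i)),
      abs_div, abs_of_nonneg (norm_nonneg (a i)), div_div]
    ring_nf
  rw [habs j, habs istar]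
  have hγs : 0 < Real.sqrt γ := Real.sqrt_pos.mpr hγ
  exact div_le_div_of_nonneg_right hmain hγs.le
end
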